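/- arXiv:math/0506306 — 4 statements merged into one kernel-verified Lean document; each statement's English description precedes it below -/
import Mathlib

section
/- The element w of W is nontrivial and is contained in every subgroup of finite index of W; in particular, W is not residually finite. -/
/- Generators: `Gen.a i` is the generator a(i+1), `Gen.b i` is b(i+1) of the paper. -/
inductive Gen : Type
  | a : Fin 4 → Gen
  | b : Fin 3 → Gen

/-- The letter aᵢ₊₁ viewed in the free group. -/
def ga (i : Fin 4) : FreeGroup Gen := FreeGroup.of (Gen.a i)

/-- The letter bᵢ₊₁ viewed in the free group. -/
def gb (i : Fin 3) : FreeGroup Gen := FreeGroup.of (Gen.b i)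

/-- The 12 relators. -/
def rels : Set (FreeGroup Gen) :=
  { ga 0 * gb 0 * (ga 1)⁻¹ * (gb 1)⁻¹,
    ga 0 * gb 1 * (ga 0)⁻¹ * (gb 0)⁻¹,
    ga 0 * gb 2 * (ga 1)⁻¹ * (gb 2)⁻¹,
    ga 0 * (gb 2)⁻¹ * (ga 1)⁻¹ * gb 1,
    ga 0 * (gb 0)⁻¹ * (ga 1)⁻¹ * gb 2,
    ga 1 * gb 1 * (ga 1)⁻¹ * (gb 0)⁻¹,
    ga 2 * gb 0 * (ga 3)⁻¹ * (gb 1)⁻¹,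
    ga 2 * gb 1 * (ga 2)⁻¹ * (gb 0)⁻¹,
    ga 2 * gb 2 * (ga 3)⁻¹ * (gb 2)⁻¹,
    ga 2 * (gb 2)⁻¹ * (ga 3)⁻¹ * gb 1,
    ga 2 * (gb 0)⁻¹ * (ga 3)⁻¹ * gb 2,
    ga 3 * gb 1 * (ga 3)⁻¹ * (gb 0)⁻¹ }

/-- The presented group. -/
abbrev G : Type := PresentedGroup rels

/-- The image of the generator aᵢ₊₁ in the presented group. -/
def γa (i : Fin 4) : G := PresentedGroup.of (Gen.a i)

/-- The image of the generator bᵢ₊₁ in the presented group. -/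
def γb (i : Fin 3) : G := PresentedGroup.of (Gen.b i)

/-- The element w = a₂·a₁⁻¹·a₃·a₄⁻¹. -/
def w : G := γa 1 * (γa 0)⁻¹ * γa 2 * (γa 3)⁻¹

/-!
The twelve relators are squares `aᵢ bⱼ = bₗ aₖ`, and every pair of a signed `a`-letter and a
signed `b`-letter occurs at exactly one corner of one square. Hence a `b`-letter can be pushed
across any `a`-word, which makes `W` act on the free group `F(a₁, a₂, a₃, a₄)` (the vertices of
the `a`-tree), the `aᵢ` acting by left multiplication. This action sends `1` to the reduced word
`a₂ a₁⁻¹ a₃ a₄⁻¹`, so `w ≠ 1`.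

The squares involving `a₃, a₄` are those involving `a₁, a₂` with `a₃, a₄` in their place.
Pushing `a₁` or `a₂` across a `b`-word `u` in which `b₁` and `b₃` together occur an odd number
of times swaps `a₁` and `a₂`. In a finite quotient take `u = b₁`, of order `m`. If `m` is odd,
pushing `a₁` across `uᵐ = 1` expresses `a₁ a₂⁻¹` as a `b`-word that depends only on `u`, and the
same word expresses `a₃ a₄⁻¹`. If `m` is even, `a₁ u² a₁⁻¹` is again such a `b`-word, and its
`m / 2`-th power is `1`. So `a₁ a₂⁻¹ = a₃ a₄⁻¹` in every finite quotient, which kills `w`.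
-/

namespace Wise

def aGen (h s : Bool) : Fin 4 := cond h (cond s 3 2) (cond s 1 0)

/-- `squareStep s j = (l, t)` when `a_s bⱼ = bₗ a_t` is a square, `a_false = a₁`, `a_true = a₂`. -/
def squareStep : Bool → Fin 3 → Fin 3 × Bool
  | false, 0 => (1, true)
  | false, 1 => (0, false)
  | false, 2 => (2, true)
  | true, 0 => (2, false)
  | true, 1 => (0, true)
  | true, 2 => (1, false)

section Relations

variable {Q : Type*} [Group Q]

lemma mul_mul_inv_mul_inv_eq_one_iff {a b c d : Q} :
    a * b * c⁻¹ * d⁻¹ = 1 ↔ a * b = d * c := by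
  rw [mul_inv_eq_one, mul_inv_eq_iff_eq_mul]

lemma mul_inv_mul_inv_mul_eq_one_iff {a b c d : Q} :
    a * b⁻¹ * c⁻¹ * d = 1 ↔ c * b = d * a := by
  rw [mul_eq_one_iff_inv_eq, mul_inv_rev, mul_inv_rev, inv_inv, inv_inv, ← mul_assoc,
    mul_inv_eq_iff_eq_mul]

theorem relators_eq_one_iff (f : Gen → Q) :
    (∀ r ∈ rels, FreeGroup.lift f r = 1) ↔ ∀ h s j,
      f (.a (aGen h s)) * f (.b j) =
        f (.b (squareStep s j).1) * f (.a (aGen h (squareStep s j).2)) := by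
  simp only [rels, Set.forall_mem_insert, Set.mem_singleton_iff, forall_eq, ga, gb, map_mul,
    map_inv, FreeGroup.lift_apply_of, mul_mul_inv_mul_inv_eq_one_iff,
    mul_inv_mul_inv_mul_eq_one_iff]
  constructor
  · rintro ⟨_, _, _, _, _, _, _, _, _, _, _, _⟩ (_ | _) (_ | _) j <;> fin_cases j <;> assumption
  · intro h
    exact ⟨h false false 0, h false false 1, h false false 2, h false true 2, h false true 0,
      h false true 1, h true false 0, h true false 1, h true false 2, h true true 2,
      h true true 0, h true true 1⟩

end Relations

lemma lift_of_eq_mk {α : Type*} (rels : Set (FreeGroup α)) :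
    FreeGroup.lift PresentedGroup.of = PresentedGroup.mk rels :=
  FreeGroup.ext_hom _ _ fun _ => FreeGroup.lift_apply_of

lemma square_rel (h s : Bool) (j : Fin 3) :
    γa (aGen h s) * γb j = γb (squareStep s j).1 * γa (aGen h (squareStep s j).2) :=
  (relators_eq_one_iff PresentedGroup.of).1
    (fun _ hr => lift_of_eq_mk rels ▸ PresentedGroup.one_of_mem hr) h s j

section TreeAction

abbrev ALetter := Fin 4 × Bool

abbrev BLetter := Fin 3 × Bool

def BLetter.inv (s : BLetter) : BLetter := (s.1, !s.2)

lemma BLetter.inv_inv (s : BLetter) : s.inv.inv = s := by simp [BLetter.inv]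

/-- The four corners of the square `aᵢ bⱼ = bₗ aₖ`, each read as a rule `b a = a' b'`. -/
def squareCorners (i : Fin 4) (j : Fin 3) (k : Fin 4) (l : Fin 3) :
    List ((BLetter × ALetter) × (ALetter × BLetter)) :=
  [(((l, true), (k, true)), ((i, true), (j, true))),
   (((l, false), (i, true)), ((k, true), (j, false))),
   (((j, true), (k, false)), ((i, false), (l, true))),
   (((j, false), (i, false)), ((k, false), (l, false)))]

def corners : List ((BLetter × ALetter) × (ALetter × BLetter)) :=
  [false, true].flatMap fun h => [false, true].flatMap fun s =>
    (List.finRange 3).flatMap fun j =>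
      squareCorners (aGen h s) j (aGen h (squareStep s j).2) (squareStep s j).1

/-- Every pair `(s, x)` occurs in `corners`, so the default value is never used. -/
def crossB (s : BLetter) (x : ALetter) : ALetter × BLetter :=
  (corners.lookup (s, x)).getD (x, s)

lemma crossB_crossB_inv : ∀ (s : BLetter) (x : ALetter),
    crossB (crossB s x).2 (x.1, !x.2) = (((crossB s x).1.1, !(crossB s x).1.2), s) := by
  decide

lemma crossB_inv_crossB : ∀ (s : BLetter) (x : ALetter),
    crossB s.inv (crossB s x).1 = (x, (crossB s x).2.inv) := by
  decide

lemma crossB_square : ∀ h s j,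
    crossB ((squareStep s j).1, true) (aGen h (squareStep s j).2, true) =
      ((aGen h s, true), (j, true)) := by
  decide

def crossBWord : BLetter → List ALetter → List ALetter
  | _, [] => []
  | s, x :: L => (crossB s x).1 :: crossBWord (crossB s x).2 L

def crossBState : BLetter → List ALetter → BLetter
  | s, [] => s
  | s, x :: L => crossBState (crossB s x).2 L

lemma crossBWord_append (L₁ L₂ : List ALetter) (s : BLetter) :
    crossBWord s (L₁ ++ L₂) = crossBWord s L₁ ++ crossBWord (crossBState s L₁) L₂ := by
  induction L₁ generalizing s with
  | nil => rfl
  | cons x L ih => simp [crossBWord, crossBState, ih]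

lemma crossBWord_inv_crossBWord (L : List ALetter) (s : BLetter) :
    crossBWord s.inv (crossBWord s L) = L := by
  induction L generalizing s with
  | nil => rfl
  | cons x L ih => simp [crossBWord, crossB_inv_crossB, ih]

lemma crossBWord_red_step (s : BLetter) {L₁ L₂ : List ALetter}
    (h : FreeGroup.Red.Step L₁ L₂) : FreeGroup.Red.Step (crossBWord s L₁) (crossBWord s L₂) := by
  obtain @⟨L, L', x, b⟩ := h
  simp only [crossBWord_append, crossBWord, crossB_crossB_inv (crossBState s L) (x, b)]
  exact FreeGroup.Red.Step.not

def crossBPerm (s : BLetter) : Equiv.Perm (FreeGroup (Fin 4)) where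
  toFun := Quot.map (crossBWord s) fun _ _ => crossBWord_red_step s
  invFun := Quot.map (crossBWord s.inv) fun _ _ => crossBWord_red_step s.inv
  left_inv := by
    rintro ⟨L⟩
    exact congrArg (Quot.mk _) (crossBWord_inv_crossBWord L s)
  right_inv := by
    rintro ⟨L⟩
    have h := crossBWord_inv_crossBWord L s.inv
    rw [BLetter.inv_inv] at h
    exact congrArg (Quot.mk _) h

lemma mulLeft_mul_crossBPerm {s t : BLetter} {x y : Fin 4}
    (h : crossB s (y, true) = ((x, true), t)) :
    Equiv.mulLeft (FreeGroup.of x) * crossBPerm t =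
      crossBPerm s * Equiv.mulLeft (FreeGroup.of y) := by
  ext ⟨L⟩
  change FreeGroup.mk ((x, true) :: crossBWord t L) = FreeGroup.mk (crossBWord s ((y, true) :: L))
  rw [crossBWord, h]

def treeAction : Gen → Equiv.Perm (FreeGroup (Fin 4))
  | .a i => Equiv.mulLeft (FreeGroup.of i)
  | .b j => crossBPerm (j, true)

noncomputable def treeRep : G →* Equiv.Perm (FreeGroup (Fin 4)) :=
  PresentedGroup.toGroup <| (relators_eq_one_iff treeAction).2 fun h s j =>
    mulLeft_mul_crossBPerm (crossB_square h s j)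

theorem w_ne_one : w ≠ 1 := by
  intro hw
  have h : treeRep w 1 =
      FreeGroup.of 1 * (FreeGroup.of 0)⁻¹ * FreeGroup.of 2 * (FreeGroup.of 3)⁻¹ := by
    simp only [w, γa, map_mul, map_inv, treeRep, PresentedGroup.toGroup.of, treeAction,
      Equiv.Perm.inv_def, Equiv.mulLeft_symm, Equiv.Perm.coe_mul, Function.comp_apply,
      Equiv.coe_mulLeft, mul_one, mul_assoc]
  simp only [hw, map_one, Equiv.Perm.one_apply] at h
  exact absurd h.symm (by decide)

end TreeAction

section FiniteQuotients

def crossAWord : Bool → List (Fin 3) → List (Fin 3)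
  | _, [] => []
  | s, j :: L => (squareStep s j).1 :: crossAWord (squareStep s j).2 L

/-- `b₁` and `b₃` (indices `0` and `2`) are the letters whose squares swap `a₁` and `a₂`. -/
def swapParity : List (Fin 3) → Bool
  | [] => false
  | j :: L => xor (j != 1) (swapParity L)

lemma squareStep_snd : ∀ s j, (squareStep s j).2 = xor s (j != 1) := by decide

lemma squareStep_fst_swap : ∀ s j,
    xor ((squareStep s j).1 != 1) ((squareStep (!s) j).1 != 1) = (j != 1) := by
  decide

lemma swapParity_append (L₁ L₂ : List (Fin 3)) :
    swapParity (L₁ ++ L₂) = xor (swapParity L₁) (swapParity L₂) := by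
  induction L₁ with
  | nil => simp [swapParity]
  | cons j L ih => simp [swapParity, ih]

lemma swapParity_crossAWord (L : List (Fin 3)) (s : Bool) :
    xor (swapParity (crossAWord s L)) (swapParity (crossAWord (!s) L)) = swapParity L := by
  induction L generalizing s with
  | nil => rfl
  | cons j L ih =>
    have hnot : (squareStep (!s) j).2 = !(squareStep s j).2 := by simp [squareStep_snd]
    rw [crossAWord, crossAWord, swapParity, swapParity, swapParity, hnot,
      ← ih (squareStep s j).2, ← squareStep_fst_swap s j]
    simp only [Bool.xor_assoc, Bool.xor_left_comm]

variable {Q : Type*} [Group Q]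

lemma mul_pow_two_mul_eq {z z' u v v' : Q} (h : z * u = v * z') (h' : z' * u = v' * z)
    (t : ℕ) : z * u ^ (2 * t) = (v * v') ^ t * z := by
  have hsq : z * u ^ 2 * z⁻¹ = v * v' := by
    rw [pow_two, ← mul_assoc, h, mul_assoc v, h']
    group
  rw [← hsq, conj_pow, pow_mul]
  group

lemma mul_inv_eq_of_pow_odd_eq_one {z z' u v v' : Q} (h : z * u = v * z')
    (h' : z' * u = v' * z) {t : ℕ} (hu : u ^ (2 * t + 1) = 1) : z * z'⁻¹ = (v * v') ^ t * v := by
  rw [mul_inv_eq_iff_eq_mul]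
  calc z = z * u ^ (2 * t) * u := by rw [mul_assoc, ← pow_succ, hu, mul_one]
    _ = (v * v') ^ t * v * z' := by rw [mul_pow_two_mul_eq h h', mul_assoc, h, mul_assoc]

def SquareRelations (x : Bool → Q) (y : Fin 3 → Q) : Prop :=
  ∀ s j, x s * y j = y (squareStep s j).1 * x (squareStep s j).2

namespace SquareRelations

variable {x x' : Bool → Q} {y : Fin 3 → Q}

lemma mul_prod (hx : SquareRelations x y) (L : List (Fin 3)) (s : Bool) :
    x s * (L.map y).prod = ((crossAWord s L).map y).prod * x (xor s (swapParity L)) := by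
  induction L generalizing s with
  | nil => simp [crossAWord, swapParity]
  | cons j L ih =>
    simp only [List.map_cons, List.prod_cons, crossAWord, swapParity]
    rw [← mul_assoc, hx, mul_assoc, ih, squareStep_snd, Bool.xor_assoc, mul_assoc]

lemma swap_mul_prod (hx : SquareRelations x y) {L : List (Fin 3)} (hL : swapParity L = true) :
    x false * (L.map y).prod = ((crossAWord false L).map y).prod * x true ∧
      x true * (L.map y).prod = ((crossAWord true L).map y).prod * x false :=
  ⟨by simpa [hL] using hx.mul_prod L false, by simpa [hL] using hx.mul_prod L true⟩

/-- For even `m`, `x false` conjugates `u²` to the word `crossAWord false L ++ crossAWord true L`,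
which again has odd swap parity, and whose order is `m / 2`. -/
lemma ratio_eq (hx : SquareRelations x y) (hx' : SquareRelations x' y) {m : ℕ} (hm : 0 < m)
    {L : List (Fin 3)} (hL : swapParity L = true) (hpow : (L.map y).prod ^ m = 1) :
    x false * (x true)⁻¹ = x' false * (x' true)⁻¹ := by
  induction m using Nat.strong_induction_on generalizing L with
  | _ m ih =>
  obtain ⟨h₁, h₂⟩ := hx.swap_mul_prod hL
  obtain ⟨h₁', h₂'⟩ := hx'.swap_mul_prod hL
  obtain ⟨t, rfl | rfl⟩ := Nat.even_or_odd' m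
  · refine ih t (by omega) (by omega) (L := crossAWord false L ++ crossAWord true L) ?_ ?_
    · simpa [swapParity_append, hL] using swapParity_crossAWord L false
    · have h := mul_pow_two_mul_eq h₁ h₂ t
      rwa [hpow, mul_one, right_eq_mul, ← List.prod_append, ← List.map_append] at h
  · rw [mul_inv_eq_of_pow_odd_eq_one h₁ h₂ hpow, mul_inv_eq_of_pow_odd_eq_one h₁' h₂' hpow]

end SquareRelations

theorem map_w_eq_one [Finite Q] (φ : G →* Q) : φ w = 1 := by
  have hsq (h : Bool) : SquareRelations (fun s => φ (γa (aGen h s))) (fun j => φ (γb j)) :=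
    fun s j => by simpa using congrArg φ (square_rel h s j)
  have hratio := (hsq false).ratio_eq (hsq true) (Nat.card_pos (α := Q)) (L := [0]) rfl
    (by simp)
  simp only [aGen, cond] at hratio
  calc φ w = (φ (γa 0) * (φ (γa 1))⁻¹)⁻¹ * (φ (γa 2) * (φ (γa 3))⁻¹) := by
        simp [w, mul_assoc]
    _ = 1 := by rw [hratio, inv_mul_cancel]

end FiniteQuotients

theorem w_mem_of_finiteIndex (H : Subgroup G) [H.FiniteIndex] : w ∈ H :=
  H.normalCore_le <| (QuotientGroup.eq_one_iff w).1 <|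
    map_w_eq_one (QuotientGroup.mk' H.normalCore)

end Wise

/-- w is nontrivial, lies in every finite-index subgroup; hence the group is
not residually finite. -/
theorem w_in_every_finite_index_subgroup :
    w ≠ 1 ∧ (∀ H : Subgroup G, H.FiniteIndex → w ∈ H) ∧
      ¬ (∀ g : G, g ≠ 1 → ∃ N : Subgroup G, N.Normal ∧ N.FiniteIndex ∧ g ∉ N) := by
  refine ⟨Wise.w_ne_one, fun H _ => Wise.w_mem_of_finiteIndex H, fun hres => ?_⟩
  obtain ⟨N, -, hN, hwN⟩ := hres w Wise.w_ne_one
  exact hwN (Wise.w_mem_of_finiteIndex N)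
end

section
/- Let G be a group and w ∈ G an element that belongs to every subgroup of finite index of G. If the normal closure N of w in G has finite index in G, then N has no proper subgroup of finite index: every finite-index subgroup of N equals N. -/
/-- If w lies in every finite-index subgroup of G and its normal closure N has
finite index in G, then N has no proper finite-index subgroup. -/
theorem normalClosure_no_proper_finite_index {G : Type*} [Group G] (w : G)
    (hw : ∀ H : Subgroup G, H.FiniteIndex → w ∈ H)
    (hN : (Subgroup.normalClosure ({w} : Set G)).FiniteIndex) :
    ∀ K : Subgroup ↥(Subgroup.normalClosure ({w} : Set G)), K.FiniteIndex → K = ⊤ := by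
  set N := Subgroup.normalClosure ({w} : Set G)
  intro K hK
  have hmapfi : (K.map N.subtype).FiniteIndex := by
    constructor
    rw [Subgroup.index_map_subtype]
    exact Nat.mul_ne_zero hK.index_ne_zero hN.index_ne_zero
  haveI := hmapfi
  have hcorefi : (K.map N.subtype).normalCore.FiniteIndex := inferInstance
  have hwcore : w ∈ (K.map N.subtype).normalCore := hw _ hcorefi
  have hNle : N ≤ (K.map N.subtype).normalCore :=
    Subgroup.normalClosure_le_normal (by simpa using hwcore)
  have hle : N ≤ K.map N.subtype := hNle.trans (Subgroup.normalCore_le _)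
  have heq : K.map N.subtype = N := le_antisymm (by
    rintro x ⟨y, _, rfl⟩; exact y.2) hle
  rw [Subgroup.eq_top_iff']
  intro x
  obtain ⟨y, hy, hyx⟩ := hle x.2
  cases Subtype.ext hyx
  exact hy
end

section
/- The subgroup of the symmetric group on {1,...,10} generated by the five permutations (7,8)(9,10), (1,2)(3,4), (1,2)(3,4)(7,8)(9,10), (1,8,4,5)(2,7,3,10), (1,9,4,8)(3,10,6,7) equals the alternating group A₁₀. -/
open Equiv Equiv.Perm Subgroup

private abbrev Kset : Set (Equiv.Perm (Fin 10)) :=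
  { c[(6 : Fin 10), 7] * c[(8 : Fin 10), 9],
    c[(0 : Fin 10), 1] * c[(2 : Fin 10), 3],
    c[(0 : Fin 10), 1] * c[(2 : Fin 10), 3] * c[(6 : Fin 10), 7] * c[(8 : Fin 10), 9],
    c[(0 : Fin 10), 7, 3, 4] * c[(1 : Fin 10), 6, 2, 9],
    c[(0 : Fin 10), 8, 3, 7] * c[(2 : Fin 10), 9, 5, 6] }

private abbrev H : Subgroup (Equiv.Perm (Fin 10)) := Subgroup.closure Kset

private def gen : Nat → Equiv.Perm (Fin 10)
  | 0 => c[(6 : Fin 10), 7] * c[(8 : Fin 10), 9]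
  | 1 => c[(0 : Fin 10), 1] * c[(2 : Fin 10), 3]
  | 2 => c[(0 : Fin 10), 1] * c[(2 : Fin 10), 3] * c[(6 : Fin 10), 7] * c[(8 : Fin 10), 9]
  | 3 => c[(0 : Fin 10), 7, 3, 4] * c[(1 : Fin 10), 6, 2, 9]
  | 4 => c[(0 : Fin 10), 8, 3, 7] * c[(2 : Fin 10), 9, 5, 6]
  | 5 => (c[(0 : Fin 10), 7, 3, 4] * c[(1 : Fin 10), 6, 2, 9])⁻¹
  | 6 => (c[(0 : Fin 10), 8, 3, 7] * c[(2 : Fin 10), 9, 5, 6])⁻¹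
  | _ => 1

private lemma gen_mem : ∀ i : Nat, gen i ∈ H := by
  intro i
  match i with
  | 0 => exact subset_closure (Set.mem_insert _ _)
  | 1 => exact subset_closure (Set.mem_insert_of_mem _ (Set.mem_insert _ _))
  | 2 => exact subset_closure (Set.mem_insert_of_mem _ (Set.mem_insert_of_mem _ (Set.mem_insert _ _)))
  | 3 => exact subset_closure (Set.mem_insert_of_mem _ (Set.mem_insert_of_mem _
      (Set.mem_insert_of_mem _ (Set.mem_insert _ _))))
  | 4 => exact subset_closure (Set.mem_insert_of_mem _ (Set.mem_insert_of_mem _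
      (Set.mem_insert_of_mem _ (Set.mem_insert_of_mem _ (Set.mem_singleton _)))))
  | 5 => exact inv_mem (subset_closure (Set.mem_insert_of_mem _ (Set.mem_insert_of_mem _
      (Set.mem_insert_of_mem _ (Set.mem_insert _ _)))))
  | 6 => exact inv_mem (subset_closure (Set.mem_insert_of_mem _ (Set.mem_insert_of_mem _
      (Set.mem_insert_of_mem _ (Set.mem_insert_of_mem _ (Set.mem_singleton _))))))
  | (n+7) => exact one_mem _

private lemma prod_mem_H : ∀ l : List Nat, (l.map gen).prod ∈ H := by
  intro l
  induction l with
  | nil => exact one_mem _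
  | cons a l ih =>
    rw [List.map_cons, List.prod_cons]
    exact mul_mem (gen_mem a) ih

private def w0 : List (List Nat) :=
  [ [],
  [],
  [],
  [],
  [],
  [],
  [],
  [],
  [],
  [],
  [],
  [],
  [4, 3, 0, 3, 0, 5, 2, 5, 6],
  [4, 3, 3, 0, 3, 1, 3, 6, 1],
  [3, 0, 3, 4, 4, 3, 1, 4, 2],
  [1, 4, 0, 4, 1, 4, 0, 4],
  [0, 6, 3, 0, 5, 1, 4, 0],
  [6, 3, 0, 5, 1, 4],
  [1, 3, 0, 5],
  [2, 3, 0, 5, 0],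
  [],
  [1, 4, 3, 3, 0, 3, 1, 3, 6],
  [],
  [4, 3, 1, 3, 0, 3, 3, 6],
  [6, 0, 3, 1, 5, 4],
  [3, 1, 4, 3, 2, 5, 6, 3, 1],
  [0, 5, 4, 1, 5, 0, 3, 6, 3, 0],
  [5, 4, 1, 5, 0, 3, 6, 3],
  [5, 0, 3, 3, 0, 5, 1],
  [0, 5, 0, 3, 3, 0, 5, 2],
  [],
  [1, 4, 3, 1, 3, 0, 3, 3, 6],
  [4, 3, 3, 0, 3, 1, 3, 6],
  [],
  [3, 2, 4, 5, 6, 5, 6, 5, 6, 2],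
  [6, 3, 1, 3, 0, 3, 3, 4],
  [0, 6, 5, 1, 4, 5, 2, 6, 3],
  [1, 6, 2, 3, 0, 5, 0, 4, 1],
  [1, 5, 0, 3, 1, 3, 0, 5, 1],
  [2, 5, 0, 3, 1, 3, 0, 5, 2],
  [],
  [2, 3, 0, 3, 4, 4, 3, 1, 4],
  [6, 3, 1, 5, 0, 4],
  [2, 4, 3, 4, 3, 4, 3, 6, 2, 5],
  [],
  [3, 4, 0, 3, 1, 5, 6, 5],
  [1, 3, 6, 0, 5, 2, 3, 4, 3, 3],
  [3, 4, 3, 4, 5, 4, 3, 4, 3, 6],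
  [2, 3, 2, 5, 0, 3, 0, 5, 2],
  [5, 6, 3, 0, 5, 1, 4, 3],
  [],
  [4, 0, 4, 1, 4, 0, 4, 1],
  [1, 5, 1, 4, 3, 2, 5, 6, 5],
  [6, 3, 3, 0, 3, 1, 3, 4],
  [3, 4, 3, 1, 5, 0, 6, 5],
  [],
  [1, 5, 2, 3, 4, 1, 5, 6, 2],
  [4, 1, 5, 6, 0, 5, 2, 3],
  [1, 4, 2, 3, 0, 5, 0, 6, 1],
  [2, 4, 2, 3, 0, 5, 0, 6, 2],
  [],
  [0, 6, 1, 3, 0, 5, 4, 0],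
  [0, 5, 4, 5, 0, 3, 1, 6, 3, 0],
  [2, 6, 0, 3, 0, 5, 2, 4, 2],
  [1, 4, 5, 1, 6, 3, 6, 1, 5, 6],
  [0, 4, 4, 5, 0, 3, 2, 4, 4],
  [],
  [1, 3, 0, 3, 0, 5, 2, 5, 1],
  [6, 5, 0, 3, 1, 4],
  [5, 6, 0, 3, 0, 5, 2, 4, 3],
  [],
  [6, 1, 3, 0, 5, 4],
  [5, 4, 5, 0, 3, 1, 6, 3],
  [0, 5, 4, 2, 3, 6, 1, 3, 4],
  [4, 5, 6, 5, 6, 3, 6, 5, 6, 5],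
  [4, 4, 5, 0, 3, 1, 4, 4],
  [1, 3, 2, 3, 0, 5, 0, 5, 1],
  [],
  [3, 1, 4, 2, 3, 0, 3, 4, 4],
  [0, 6, 5, 0, 3, 1, 4, 0],
  [],
  [3, 0, 5, 1],
  [1, 3, 0, 3, 3, 0, 3],
  [1, 3, 0, 3, 1, 3, 0, 3, 1],
  [1, 4, 2, 3, 0, 3, 4, 4, 3],
  [1, 4, 0, 3, 0, 5, 2, 6, 1],
  [6, 1, 5, 0, 3, 4],
  [4, 4, 5, 0, 5, 2, 6, 1, 5],
  [],
  [2, 3, 0, 5, 0, 3, 0, 5, 1],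
  [],
  [0, 3, 0, 5, 2],
  [2, 3, 0, 3, 3, 0, 3, 0],
  [2, 3, 0, 3, 1, 3, 0, 3, 2],
  [5, 6, 1, 3, 0, 5, 4, 3],
  [2, 4, 0, 3, 0, 5, 2, 6, 2],
  [5, 6, 2, 3, 0, 5, 0, 4, 3],
  [0, 6, 1, 5, 0, 3, 4, 0],
  [1, 3, 0, 5, 0, 3, 0, 5, 2],
  [] ]

private def w1 : List (List Nat) :=
  [ [],
  [],
  [1, 4, 3, 3, 0, 3, 1, 3, 6],
  [1, 4, 3, 1, 3, 0, 3, 3, 6],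
  [2, 3, 0, 3, 4, 4, 3, 1, 4],
  [4, 0, 4, 1, 4, 0, 4, 1],
  [0, 6, 1, 3, 0, 5, 4, 0],
  [6, 1, 3, 0, 5, 4],
  [3, 0, 5, 1],
  [0, 3, 0, 5, 2],
  [],
  [],
  [],
  [],
  [],
  [],
  [],
  [],
  [],
  [],
  [4, 3, 0, 3, 0, 5, 2, 5, 6],
  [],
  [],
  [3, 0, 5, 4, 1, 3, 0, 5, 6],
  [6, 3, 0, 5, 0, 3, 2, 5, 4],
  [1, 6, 3, 1, 3, 0, 3, 3, 4, 1],
  [0, 6, 2, 3, 0, 5, 0, 4, 0],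
  [6, 2, 3, 0, 5, 0, 4],
  [5, 0, 3, 1, 3, 0, 5],
  [0, 5, 0, 3, 1, 3, 0, 5, 0],
  [4, 3, 3, 0, 3, 1, 3, 6, 1],
  [],
  [4, 3, 0, 5, 1, 6, 3, 0, 5],
  [],
  [1, 6, 0, 3, 1, 5, 4, 1],
  [1, 3, 1, 4, 3, 2, 5, 6, 3],
  [0, 4, 4, 3, 0, 5, 2, 4, 4],
  [4, 4, 3, 0, 5, 1, 4, 4],
  [4, 1, 3, 0, 5, 6],
  [0, 4, 1, 3, 0, 5, 6, 0],
  [3, 0, 3, 4, 4, 3, 1, 4, 2],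
  [],
  [6, 3, 2, 5, 0, 3, 0, 5, 4],
  [1, 6, 3, 1, 5, 0, 4, 1],
  [],
  [4, 3, 2, 5, 0, 3, 0, 5, 6],
  [0, 5, 2, 3, 6, 3, 0, 6, 3, 6],
  [2, 4, 5, 2, 4, 5, 1, 4, 4, 5],
  [5, 6, 1, 5, 0, 3, 4, 3],
  [3, 2, 5, 0, 3, 0, 5],
  [1, 4, 0, 4, 1, 4, 0, 4],
  [],
  [1, 5, 6, 1, 4, 5, 1, 6, 3, 6],
  [3, 4, 2, 5, 0, 3, 0, 6, 5],
  [4, 3, 0, 5, 0, 3, 2, 5, 6],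
  [],
  [5, 2, 3, 4, 1, 5, 6, 0],
  [0, 5, 2, 3, 4, 1, 5, 6],
  [4, 2, 3, 0, 5, 0, 6],
  [0, 4, 2, 3, 0, 5, 0, 6, 0],
  [0, 6, 3, 0, 5, 1, 4, 0],
  [],
  [0, 6, 0, 3, 0, 5, 2, 4, 0],
  [4, 4, 2, 3, 0, 5, 0, 4, 4],
  [1, 3, 3, 6, 5, 2, 3, 0, 4, 5],
  [0, 4, 3, 1, 6, 5, 2, 3],
  [],
  [3, 0, 3, 0, 5, 2, 5],
  [1, 6, 5, 0, 3, 1, 4, 1],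
  [0, 5, 4, 1, 3, 6, 1, 4, 3, 4],
  [6, 3, 0, 5, 1, 4],
  [],
  [6, 0, 3, 0, 5, 2, 4],
  [3, 4, 1, 6, 5, 6, 1, 4],
  [0, 4, 5, 4, 0, 5, 4, 5, 2, 3],
  [4, 3, 1, 6, 5, 2, 3, 0],
  [3, 2, 3, 0, 5, 0, 5],
  [],
  [6, 1, 4, 3, 1, 3, 0, 3, 3],
  [0, 4, 1, 4, 0, 4, 1, 4],
  [1, 3, 0, 5],
  [],
  [3, 0, 3, 1, 3, 0, 3],
  [4, 3, 0, 5, 1, 6],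
  [5, 6, 5, 0, 3, 1, 4, 3],
  [4, 0, 3, 0, 5, 2, 6],
  [0, 6, 1, 4, 0, 4, 1, 6],
  [3, 3, 0, 3, 1, 3, 6, 1, 4],
  [],
  [0, 3, 0, 5, 0, 3, 0, 5],
  [2, 3, 0, 5, 0],
  [],
  [0, 3, 0, 3, 1, 3, 0, 3, 0],
  [0, 3, 0, 3, 3, 0, 3, 2],
  [3, 0, 5, 0, 3, 2, 5],
  [0, 4, 0, 3, 0, 5, 2, 6, 0],
  [0, 4, 1, 6, 3, 1, 3, 0, 3, 3],
  [2, 6, 1, 5, 0, 3, 4, 2],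
  [3, 0, 5, 0, 3, 0, 5, 0],
  [] ]

private def w2 : List (List Nat) :=
  [ [],
  [4, 3, 0, 3, 0, 5, 2, 5, 6],
  [],
  [4, 3, 3, 0, 3, 1, 3, 6],
  [6, 3, 1, 5, 0, 4],
  [1, 5, 1, 4, 3, 2, 5, 6, 5],
  [0, 5, 4, 5, 0, 3, 1, 6, 3, 0],
  [5, 4, 5, 0, 3, 1, 6, 3],
  [1, 3, 0, 3, 3, 0, 3],
  [2, 3, 0, 3, 3, 0, 3, 0],
  [1, 4, 3, 3, 0, 3, 1, 3, 6],
  [],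
  [],
  [4, 3, 0, 5, 1, 6, 3, 0, 5],
  [6, 3, 2, 5, 0, 3, 0, 5, 4],
  [1, 5, 6, 1, 4, 5, 1, 6, 3, 6],
  [0, 6, 0, 3, 0, 5, 2, 4, 0],
  [6, 0, 3, 0, 5, 2, 4],
  [3, 0, 3, 1, 3, 0, 3],
  [0, 3, 0, 3, 1, 3, 0, 3, 0],
  [],
  [],
  [],
  [],
  [],
  [],
  [],
  [],
  [],
  [],
  [4, 3, 1, 3, 0, 3, 3, 6],
  [3, 0, 5, 4, 1, 3, 0, 5, 6],
  [],
  [],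
  [0, 6, 2, 5, 1, 4, 4, 5, 0, 5],
  [2, 5, 6, 1, 3, 1, 3, 4, 3],
  [0, 6, 5, 6, 1, 4, 3, 4, 2],
  [6, 5, 6, 1, 4, 3, 4, 1],
  [5, 0, 3, 1],
  [0, 5, 0, 3, 2],
  [6, 0, 3, 1, 5, 4],
  [6, 3, 0, 5, 0, 3, 2, 5, 4],
  [],
  [0, 3, 0, 3, 4, 4, 1, 3, 2, 4],
  [],
  [1, 4, 3, 1, 5, 0, 6, 1],
  [6, 5, 0, 3, 0, 5, 2, 3, 4],
  [2, 6, 3, 0, 6, 5, 1, 4, 5],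
  [0, 5, 2, 3, 0, 5, 0, 3, 0],
  [5, 2, 3, 0, 5, 0, 3],
  [3, 1, 4, 3, 2, 5, 6, 3, 1],
  [1, 6, 3, 1, 3, 0, 3, 3, 4, 1],
  [],
  [4, 0, 3, 1, 3, 0, 3, 3, 6],
  [1, 4, 0, 3, 1, 5, 6, 1],
  [],
  [3, 0, 4, 3, 1, 6, 5, 2],
  [0, 3, 0, 4, 3, 1, 6, 5, 1],
  [4, 1, 5, 2, 4, 2, 5, 6, 3, 0],
  [0, 4, 1, 5, 2, 4, 2, 5, 6, 3],
  [0, 5, 4, 1, 5, 0, 3, 6, 3, 0],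
  [0, 6, 2, 3, 0, 5, 0, 4, 0],
  [],
  [2, 6, 5, 6, 1, 4, 3, 4, 0],
  [6, 5, 2, 3, 0, 5, 0, 3, 4],
  [2, 3, 4, 1, 5, 6, 0, 5],
  [],
  [5, 0, 5, 0, 3, 2, 3],
  [6, 0, 5, 0, 3, 2, 4],
  [0, 3, 6, 1, 5, 0, 3, 4, 5, 0],
  [5, 4, 1, 5, 0, 3, 6, 3],
  [6, 2, 3, 0, 5, 0, 4],
  [],
  [1, 6, 5, 6, 1, 4, 3, 4],
  [3, 0, 6, 5, 1, 4, 5, 2, 6],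
  [1, 3, 4, 1, 5, 6, 0, 5, 0],
  [5, 2, 5, 0, 3, 0, 3],
  [],
  [3, 6, 1, 5, 0, 3, 4, 5],
  [1, 4, 1, 5, 0, 3, 6, 1],
  [5, 0, 3, 3, 0, 5, 1],
  [5, 0, 3, 1, 3, 0, 5],
  [],
  [1, 5, 0, 3],
  [0, 3, 1, 3, 6, 1, 4, 3, 3],
  [0, 5, 4, 3, 2, 6, 2, 3, 1, 6],
  [6, 2, 5, 0, 3, 0, 4],
  [3, 6, 5, 0, 3, 1, 4, 5],
  [],
  [0, 5, 0, 3, 0, 5, 0, 3],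
  [0, 5, 0, 3, 3, 0, 5, 2],
  [0, 5, 0, 3, 1, 3, 0, 5, 0],
  [],
  [2, 5, 0, 3, 0],
  [5, 0, 3, 0, 5, 2, 3],
  [3, 3, 0, 4, 3, 1, 6, 5, 2, 5],
  [0, 3, 1, 3, 4, 1, 6, 0, 3, 3],
  [1, 4, 5, 0, 3, 1, 6, 1],
  [0, 3, 6, 3, 0, 5, 4, 5],
  [] ]

private def w3 : List (List Nat) :=
  [ [],
  [4, 3, 3, 0, 3, 1, 3, 6, 1],
  [4, 3, 1, 3, 0, 3, 3, 6],
  [],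
  [2, 4, 3, 4, 3, 4, 3, 6, 2, 5],
  [6, 3, 3, 0, 3, 1, 3, 4],
  [2, 6, 0, 3, 0, 5, 2, 4, 2],
  [0, 5, 4, 2, 3, 6, 1, 3, 4],
  [1, 3, 0, 3, 1, 3, 0, 3, 1],
  [2, 3, 0, 3, 1, 3, 0, 3, 2],
  [1, 4, 3, 1, 3, 0, 3, 3, 6],
  [],
  [3, 0, 5, 4, 1, 3, 0, 5, 6],
  [],
  [1, 6, 3, 1, 5, 0, 4, 1],
  [3, 4, 2, 5, 0, 3, 0, 6, 5],
  [4, 4, 2, 3, 0, 5, 0, 4, 4],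
  [3, 4, 1, 6, 5, 6, 1, 4],
  [4, 3, 0, 5, 1, 6],
  [0, 3, 0, 3, 3, 0, 3, 2],
  [4, 3, 3, 0, 3, 1, 3, 6],
  [4, 3, 0, 5, 1, 6, 3, 0, 5],
  [],
  [],
  [0, 3, 0, 3, 4, 4, 1, 3, 2, 4],
  [4, 0, 3, 1, 3, 0, 3, 3, 6],
  [2, 6, 5, 6, 1, 4, 3, 4, 0],
  [1, 6, 5, 6, 1, 4, 3, 4],
  [1, 5, 0, 3],
  [2, 5, 0, 3, 0],
  [],
  [],
  [],
  [],
  [],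
  [],
  [],
  [],
  [],
  [],
  [3, 2, 4, 5, 6, 5, 6, 5, 6, 2],
  [1, 6, 0, 3, 1, 5, 4, 1],
  [0, 6, 2, 5, 1, 4, 4, 5, 0, 5],
  [],
  [],
  [4, 3, 1, 5, 0, 6],
  [5, 6, 0, 3, 1, 5, 4, 3],
  [0, 5, 6, 0, 3, 1, 5, 4, 3, 0],
  [2, 5, 2, 3, 0, 5, 0, 3, 2],
  [0, 3, 4, 4, 3, 1, 4, 2, 3],
  [6, 3, 1, 3, 0, 3, 3, 4],
  [1, 3, 1, 4, 3, 2, 5, 6, 3],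
  [2, 5, 6, 1, 3, 1, 3, 4, 3],
  [],
  [4, 0, 3, 1, 5, 6],
  [],
  [1, 3, 0, 4, 3, 1, 6, 5, 0],
  [2, 3, 0, 4, 3, 1, 6, 5],
  [3, 2, 6, 2, 5, 6, 3, 6, 3, 6],
  [4, 0, 5, 0, 3, 0, 5, 0, 3, 6],
  [0, 6, 5, 1, 4, 5, 2, 6, 3],
  [0, 4, 4, 3, 0, 5, 2, 4, 4],
  [0, 6, 5, 6, 1, 4, 3, 4, 2],
  [],
  [5, 6, 3, 1, 5, 0, 4, 3],
  [0, 3, 4, 1, 5, 6, 0, 5, 1],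
  [],
  [3, 6, 1, 3, 0, 5, 4, 5],
  [0, 4, 1, 5, 0, 3, 6, 0],
  [3, 6, 2, 3, 0, 5, 0, 4, 5],
  [1, 6, 2, 3, 0, 5, 0, 4, 1],
  [4, 4, 3, 0, 5, 1, 4, 4],
  [6, 5, 6, 1, 4, 3, 4, 1],
  [],
  [0, 5, 6, 3, 1, 5, 0, 4, 3, 0],
  [3, 4, 1, 5, 6, 0, 5, 2],
  [3, 6, 3, 0, 5, 1, 4, 5],
  [],
  [1, 4, 5, 2, 6, 3, 0, 6, 5],
  [4, 1, 5, 0, 3, 6],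
  [1, 5, 0, 3, 1, 3, 0, 5, 1],
  [4, 1, 3, 0, 5, 6],
  [5, 0, 3, 1],
  [],
  [0, 5, 2, 6, 1, 5, 4, 4, 5],
  [4, 5, 4, 5, 4, 3, 2, 4, 2, 5],
  [0, 4, 5, 0, 3, 1, 6, 0],
  [3, 4, 0, 5, 4, 2, 3, 6, 1],
  [],
  [1, 3, 6, 3, 0, 5, 4, 5, 2],
  [2, 5, 0, 3, 1, 3, 0, 5, 2],
  [0, 4, 1, 3, 0, 5, 6, 0],
  [0, 5, 0, 3, 2],
  [],
  [1, 5, 0, 3, 0, 5, 2, 3, 1],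
  [4, 0, 3, 6, 3, 0, 5, 4, 5, 6],
  [3, 6, 0, 3, 0, 5, 2, 4, 5],
  [4, 5, 0, 3, 1, 6],
  [1, 5, 0, 3, 0, 5, 0, 3, 2],
  [] ]

private def w4 : List (List Nat) :=
  [ [],
  [3, 0, 3, 4, 4, 3, 1, 4, 2],
  [6, 0, 3, 1, 5, 4],
  [3, 2, 4, 5, 6, 5, 6, 5, 6, 2],
  [],
  [3, 4, 3, 1, 5, 0, 6, 5],
  [1, 4, 5, 1, 6, 3, 6, 1, 5, 6],
  [4, 5, 6, 5, 6, 3, 6, 5, 6, 5],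
  [1, 4, 2, 3, 0, 3, 4, 4, 3],
  [5, 6, 1, 3, 0, 5, 4, 3],
  [2, 3, 0, 3, 4, 4, 3, 1, 4],
  [],
  [6, 3, 0, 5, 0, 3, 2, 5, 4],
  [1, 6, 0, 3, 1, 5, 4, 1],
  [],
  [4, 3, 0, 5, 0, 3, 2, 5, 6],
  [1, 3, 3, 6, 5, 2, 3, 0, 4, 5],
  [0, 4, 5, 4, 0, 5, 4, 5, 2, 3],
  [5, 6, 5, 0, 3, 1, 4, 3],
  [3, 0, 5, 0, 3, 2, 5],
  [6, 3, 1, 5, 0, 4],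
  [6, 3, 2, 5, 0, 3, 0, 5, 4],
  [],
  [0, 6, 2, 5, 1, 4, 4, 5, 0, 5],
  [],
  [1, 4, 0, 3, 1, 5, 6, 1],
  [6, 5, 2, 3, 0, 5, 0, 3, 4],
  [3, 0, 6, 5, 1, 4, 5, 2, 6],
  [0, 3, 1, 3, 6, 1, 4, 3, 3],
  [5, 0, 3, 0, 5, 2, 3],
  [2, 4, 3, 4, 3, 4, 3, 6, 2, 5],
  [1, 6, 3, 1, 5, 0, 4, 1],
  [0, 3, 0, 3, 4, 4, 1, 3, 2, 4],
  [],
  [],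
  [4, 0, 3, 1, 5, 6],
  [5, 6, 3, 1, 5, 0, 4, 3],
  [0, 5, 6, 3, 1, 5, 0, 4, 3, 0],
  [0, 5, 2, 6, 1, 5, 4, 4, 5],
  [1, 5, 0, 3, 0, 5, 2, 3, 1],
  [],
  [],
  [],
  [],
  [],
  [],
  [],
  [],
  [],
  [],
  [3, 4, 0, 3, 1, 5, 6, 5],
  [4, 3, 2, 5, 0, 3, 0, 5, 6],
  [1, 4, 3, 1, 5, 0, 6, 1],
  [4, 3, 1, 5, 0, 6],
  [],
  [],
  [1, 3, 1, 3, 4, 3, 2, 5, 6],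
  [0, 3, 1, 3, 4, 3, 2, 5, 6, 2],
  [1, 4, 0, 3, 0, 3, 1, 4, 4, 3],
  [3, 2, 5, 6, 1, 3, 1, 3, 4],
  [1, 3, 6, 0, 5, 2, 3, 4, 3, 3],
  [0, 5, 2, 3, 6, 3, 0, 6, 3, 6],
  [6, 5, 0, 3, 0, 5, 2, 3, 4],
  [5, 6, 0, 3, 1, 5, 4, 3],
  [],
  [1, 4, 3, 2, 5, 6, 3, 1, 3],
  [],
  [4, 4, 3, 1, 5, 0, 4, 4],
  [3, 4, 3, 0, 5, 1, 6, 5],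
  [0, 3, 1, 4, 3, 0, 5, 1, 6, 5],
  [3, 4, 3, 4, 5, 4, 3, 4, 3, 6],
  [2, 4, 5, 2, 4, 5, 1, 4, 4, 5],
  [2, 6, 3, 0, 6, 5, 1, 4, 5],
  [0, 5, 6, 0, 3, 1, 5, 4, 3, 0],
  [],
  [0, 4, 3, 2, 5, 6, 3, 1, 3, 2],
  [0, 4, 4, 3, 1, 5, 4, 4],
  [],
  [0, 4, 5, 0, 3, 4, 0, 5, 6, 5],
  [0, 3, 4, 3, 0, 5, 1, 6, 5, 0],
  [2, 3, 2, 5, 0, 3, 0, 5, 2],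
  [5, 6, 1, 5, 0, 3, 4, 3],
  [0, 5, 2, 3, 0, 5, 0, 3, 0],
  [2, 5, 2, 3, 0, 5, 0, 3, 2],
  [],
  [0, 5, 6, 3, 0, 6, 5, 6, 1, 4],
  [3, 4, 1, 3, 0, 5, 6, 5],
  [0, 3, 4, 1, 3, 0, 5, 6, 1, 5],
  [],
  [0, 3, 1, 5],
  [5, 6, 3, 0, 5, 1, 4, 3],
  [3, 2, 5, 0, 3, 0, 5],
  [5, 2, 3, 0, 5, 0, 3],
  [0, 3, 4, 4, 3, 1, 4, 2, 3],
  [],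
  [4, 5, 0, 3, 0, 5, 2, 3, 6],
  [0, 3, 4, 3, 0, 6, 5, 0, 3, 6],
  [0, 3, 4, 1, 3, 0, 5, 6, 5, 0],
  [3, 1, 5, 0],
  [] ]

private def w5 : List (List Nat) :=
  [ [],
  [1, 4, 0, 4, 1, 4, 0, 4],
  [3, 1, 4, 3, 2, 5, 6, 3, 1],
  [6, 3, 1, 3, 0, 3, 3, 4],
  [3, 4, 0, 3, 1, 5, 6, 5],
  [],
  [0, 4, 4, 5, 0, 3, 2, 4, 4],
  [4, 4, 5, 0, 3, 1, 4, 4],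
  [1, 4, 0, 3, 0, 5, 2, 6, 1],
  [2, 4, 0, 3, 0, 5, 2, 6, 2],
  [4, 0, 4, 1, 4, 0, 4, 1],
  [],
  [1, 6, 3, 1, 3, 0, 3, 3, 4, 1],
  [1, 3, 1, 4, 3, 2, 5, 6, 3],
  [4, 3, 2, 5, 0, 3, 0, 5, 6],
  [],
  [0, 4, 3, 1, 6, 5, 2, 3],
  [4, 3, 1, 6, 5, 2, 3, 0],
  [4, 0, 3, 0, 5, 2, 6],
  [0, 4, 0, 3, 0, 5, 2, 6, 0],
  [1, 5, 1, 4, 3, 2, 5, 6, 5],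
  [1, 5, 6, 1, 4, 5, 1, 6, 3, 6],
  [],
  [2, 5, 6, 1, 3, 1, 3, 4, 3],
  [1, 4, 3, 1, 5, 0, 6, 1],
  [],
  [2, 3, 4, 1, 5, 6, 0, 5],
  [1, 3, 4, 1, 5, 6, 0, 5, 0],
  [0, 5, 4, 3, 2, 6, 2, 3, 1, 6],
  [3, 3, 0, 4, 3, 1, 6, 5, 2, 5],
  [6, 3, 3, 0, 3, 1, 3, 4],
  [3, 4, 2, 5, 0, 3, 0, 6, 5],
  [4, 0, 3, 1, 3, 0, 3, 3, 6],
  [],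
  [4, 3, 1, 5, 0, 6],
  [],
  [0, 3, 4, 1, 5, 6, 0, 5, 1],
  [3, 4, 1, 5, 6, 0, 5, 2],
  [4, 5, 4, 5, 4, 3, 2, 4, 2, 5],
  [4, 0, 3, 6, 3, 0, 5, 4, 5, 6],
  [3, 4, 3, 1, 5, 0, 6, 5],
  [4, 3, 0, 5, 0, 3, 2, 5, 6],
  [1, 4, 0, 3, 1, 5, 6, 1],
  [4, 0, 3, 1, 5, 6],
  [],
  [],
  [1, 4, 3, 2, 5, 6, 3, 1, 3],
  [0, 4, 3, 2, 5, 6, 3, 1, 3, 2],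
  [0, 5, 6, 3, 0, 6, 5, 6, 1, 4],
  [4, 5, 0, 3, 0, 5, 2, 3, 6],
  [],
  [],
  [],
  [],
  [],
  [],
  [],
  [],
  [],
  [],
  [1, 5, 2, 3, 4, 1, 5, 6, 2],
  [5, 2, 3, 4, 1, 5, 6, 0],
  [3, 0, 4, 3, 1, 6, 5, 2],
  [1, 3, 0, 4, 3, 1, 6, 5, 0],
  [1, 3, 1, 3, 4, 3, 2, 5, 6],
  [],
  [],
  [0, 3, 4, 2, 6, 1, 4, 2, 6, 5],
  [0, 4, 2, 5, 0, 3, 0, 6, 0],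
  [2, 5, 4, 5, 4, 5, 4, 3, 2, 4],
  [4, 1, 5, 6, 0, 5, 2, 3],
  [0, 5, 2, 3, 4, 1, 5, 6],
  [0, 3, 0, 4, 3, 1, 6, 5, 1],
  [2, 3, 0, 4, 3, 1, 6, 5],
  [0, 3, 1, 3, 4, 3, 2, 5, 6, 2],
  [],
  [3, 1, 4, 0, 4, 1, 4, 0, 4, 5],
  [],
  [2, 5, 4, 2, 5, 4, 0, 3, 3, 4],
  [4, 2, 5, 0, 3, 0, 6],
  [1, 4, 2, 3, 0, 5, 0, 6, 1],
  [4, 2, 3, 0, 5, 0, 6],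
  [4, 1, 5, 2, 4, 2, 5, 6, 3, 0],
  [3, 2, 6, 2, 5, 6, 3, 6, 3, 6],
  [1, 4, 0, 3, 0, 3, 1, 4, 4, 3],
  [],
  [0, 4, 0, 5, 0, 3, 2, 6, 0],
  [2, 6, 2, 5, 6, 3, 6, 3, 6, 3],
  [],
  [5, 4, 2, 3, 0, 5, 0, 6, 3],
  [2, 4, 2, 3, 0, 5, 0, 6, 2],
  [0, 4, 2, 3, 0, 5, 0, 6, 0],
  [0, 4, 1, 5, 2, 4, 2, 5, 6, 3],
  [4, 0, 5, 0, 3, 0, 5, 0, 3, 6],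
  [3, 2, 5, 6, 1, 3, 1, 3, 4],
  [],
  [2, 6, 3, 3, 0, 6, 3, 2, 6, 3],
  [4, 0, 5, 0, 3, 2, 6],
  [5, 4, 0, 3, 0, 5, 2, 6, 3],
  [] ]

private def w6 : List (List Nat) :=
  [ [],
  [0, 6, 3, 0, 5, 1, 4, 0],
  [0, 5, 4, 1, 5, 0, 3, 6, 3, 0],
  [0, 6, 5, 1, 4, 5, 2, 6, 3],
  [1, 3, 6, 0, 5, 2, 3, 4, 3, 3],
  [1, 5, 2, 3, 4, 1, 5, 6, 2],
  [],
  [1, 3, 2, 3, 0, 5, 0, 5, 1],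
  [6, 1, 5, 0, 3, 4],
  [5, 6, 2, 3, 0, 5, 0, 4, 3],
  [0, 6, 1, 3, 0, 5, 4, 0],
  [],
  [0, 6, 2, 3, 0, 5, 0, 4, 0],
  [0, 4, 4, 3, 0, 5, 2, 4, 4],
  [0, 5, 2, 3, 6, 3, 0, 6, 3, 6],
  [5, 2, 3, 4, 1, 5, 6, 0],
  [],
  [3, 2, 3, 0, 5, 0, 5],
  [0, 6, 1, 4, 0, 4, 1, 6],
  [0, 4, 1, 6, 3, 1, 3, 0, 3, 3],
  [0, 5, 4, 5, 0, 3, 1, 6, 3, 0],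
  [0, 6, 0, 3, 0, 5, 2, 4, 0],
  [],
  [0, 6, 5, 6, 1, 4, 3, 4, 2],
  [6, 5, 0, 3, 0, 5, 2, 3, 4],
  [3, 0, 4, 3, 1, 6, 5, 2],
  [],
  [5, 2, 5, 0, 3, 0, 3],
  [6, 2, 5, 0, 3, 0, 4],
  [0, 3, 1, 3, 4, 1, 6, 0, 3, 3],
  [2, 6, 0, 3, 0, 5, 2, 4, 2],
  [4, 4, 2, 3, 0, 5, 0, 4, 4],
  [2, 6, 5, 6, 1, 4, 3, 4, 0],
  [],
  [5, 6, 0, 3, 1, 5, 4, 3],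
  [1, 3, 0, 4, 3, 1, 6, 5, 0],
  [],
  [3, 6, 3, 0, 5, 1, 4, 5],
  [0, 4, 5, 0, 3, 1, 6, 0],
  [3, 6, 0, 3, 0, 5, 2, 4, 5],
  [1, 4, 5, 1, 6, 3, 6, 1, 5, 6],
  [1, 3, 3, 6, 5, 2, 3, 0, 4, 5],
  [6, 5, 2, 3, 0, 5, 0, 3, 4],
  [5, 6, 3, 1, 5, 0, 4, 3],
  [],
  [1, 3, 1, 3, 4, 3, 2, 5, 6],
  [],
  [0, 4, 4, 3, 1, 5, 4, 4],
  [3, 4, 1, 3, 0, 5, 6, 5],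
  [0, 3, 4, 3, 0, 6, 5, 0, 3, 6],
  [0, 4, 4, 5, 0, 3, 2, 4, 4],
  [0, 4, 3, 1, 6, 5, 2, 3],
  [2, 3, 4, 1, 5, 6, 0, 5],
  [0, 3, 4, 1, 5, 6, 0, 5, 1],
  [1, 4, 3, 2, 5, 6, 3, 1, 3],
  [],
  [],
  [3, 1, 4, 0, 4, 1, 4, 0, 4, 5],
  [0, 4, 0, 5, 0, 3, 2, 6, 0],
  [2, 6, 3, 3, 0, 6, 3, 2, 6, 3],
  [],
  [],
  [],
  [],
  [],
  [],
  [],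
  [],
  [],
  [],
  [1, 3, 0, 3, 0, 5, 2, 5, 1],
  [3, 0, 3, 0, 5, 2, 5],
  [5, 0, 5, 0, 3, 2, 3],
  [3, 6, 1, 3, 0, 5, 4, 5],
  [4, 4, 3, 1, 5, 0, 4, 4],
  [0, 3, 4, 2, 6, 1, 4, 2, 6, 5],
  [],
  [],
  [3, 3, 0, 3, 1, 3],
  [0, 3, 1, 3, 0, 3, 3, 0],
  [6, 5, 0, 3, 1, 4],
  [1, 6, 5, 0, 3, 1, 4, 1],
  [6, 0, 5, 0, 3, 2, 4],
  [0, 4, 1, 5, 0, 3, 6, 0],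
  [3, 4, 3, 0, 5, 1, 6, 5],
  [0, 4, 2, 5, 0, 3, 0, 6, 0],
  [],
  [3, 1, 3, 0, 3, 3],
  [],
  [3, 3, 0, 3, 1, 3, 0],
  [5, 6, 0, 3, 0, 5, 2, 4, 3],
  [0, 5, 4, 1, 3, 6, 1, 4, 3, 4],
  [0, 3, 6, 1, 5, 0, 3, 4, 5, 0],
  [3, 6, 2, 3, 0, 5, 0, 4, 5],
  [0, 3, 1, 4, 3, 0, 5, 1, 6, 5],
  [2, 5, 4, 5, 4, 5, 4, 3, 2, 4],
  [],
  [0, 3, 3, 0, 3, 1, 3, 0],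
  [0, 3, 1, 3, 0, 3, 3],
  [] ]

private def w7 : List (List Nat) :=
  [ [],
  [6, 3, 0, 5, 1, 4],
  [5, 4, 1, 5, 0, 3, 6, 3],
  [1, 6, 2, 3, 0, 5, 0, 4, 1],
  [3, 4, 3, 4, 5, 4, 3, 4, 3, 6],
  [4, 1, 5, 6, 0, 5, 2, 3],
  [1, 3, 0, 3, 0, 5, 2, 5, 1],
  [],
  [4, 4, 5, 0, 5, 2, 6, 1, 5],
  [0, 6, 1, 5, 0, 3, 4, 0],
  [6, 1, 3, 0, 5, 4],
  [],
  [6, 2, 3, 0, 5, 0, 4],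
  [4, 4, 3, 0, 5, 1, 4, 4],
  [2, 4, 5, 2, 4, 5, 1, 4, 4, 5],
  [0, 5, 2, 3, 4, 1, 5, 6],
  [3, 0, 3, 0, 5, 2, 5],
  [],
  [3, 3, 0, 3, 1, 3, 6, 1, 4],
  [2, 6, 1, 5, 0, 3, 4, 2],
  [5, 4, 5, 0, 3, 1, 6, 3],
  [6, 0, 3, 0, 5, 2, 4],
  [],
  [6, 5, 6, 1, 4, 3, 4, 1],
  [2, 6, 3, 0, 6, 5, 1, 4, 5],
  [0, 3, 0, 4, 3, 1, 6, 5, 1],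
  [5, 0, 5, 0, 3, 2, 3],
  [],
  [3, 6, 5, 0, 3, 1, 4, 5],
  [1, 4, 5, 0, 3, 1, 6, 1],
  [0, 5, 4, 2, 3, 6, 1, 3, 4],
  [3, 4, 1, 6, 5, 6, 1, 4],
  [1, 6, 5, 6, 1, 4, 3, 4],
  [],
  [0, 5, 6, 0, 3, 1, 5, 4, 3, 0],
  [2, 3, 0, 4, 3, 1, 6, 5],
  [3, 6, 1, 3, 0, 5, 4, 5],
  [],
  [3, 4, 0, 5, 4, 2, 3, 6, 1],
  [4, 5, 0, 3, 1, 6],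
  [4, 5, 6, 5, 6, 3, 6, 5, 6, 5],
  [0, 4, 5, 4, 0, 5, 4, 5, 2, 3],
  [3, 0, 6, 5, 1, 4, 5, 2, 6],
  [0, 5, 6, 3, 1, 5, 0, 4, 3, 0],
  [],
  [0, 3, 1, 3, 4, 3, 2, 5, 6, 2],
  [4, 4, 3, 1, 5, 0, 4, 4],
  [],
  [0, 3, 4, 1, 3, 0, 5, 6, 1, 5],
  [0, 3, 4, 1, 3, 0, 5, 6, 5, 0],
  [4, 4, 5, 0, 3, 1, 4, 4],
  [4, 3, 1, 6, 5, 2, 3, 0],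
  [1, 3, 4, 1, 5, 6, 0, 5, 0],
  [3, 4, 1, 5, 6, 0, 5, 2],
  [0, 4, 3, 2, 5, 6, 3, 1, 3, 2],
  [],
  [0, 3, 4, 2, 6, 1, 4, 2, 6, 5],
  [],
  [2, 6, 2, 5, 6, 3, 6, 3, 6, 3],
  [4, 0, 5, 0, 3, 2, 6],
  [1, 3, 2, 3, 0, 5, 0, 5, 1],
  [3, 2, 3, 0, 5, 0, 5],
  [5, 2, 5, 0, 3, 0, 3],
  [3, 6, 3, 0, 5, 1, 4, 5],
  [0, 4, 4, 3, 1, 5, 4, 4],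
  [3, 1, 4, 0, 4, 1, 4, 0, 4, 5],
  [],
  [],
  [3, 1, 3, 0, 3, 3],
  [0, 3, 3, 0, 3, 1, 3, 0],
  [],
  [],
  [],
  [],
  [],
  [],
  [],
  [],
  [],
  [],
  [3, 1, 4, 2, 3, 0, 3, 4, 4],
  [6, 1, 4, 3, 1, 3, 0, 3, 3],
  [3, 6, 1, 5, 0, 3, 4, 5],
  [1, 4, 5, 2, 6, 3, 0, 6, 5],
  [0, 4, 5, 0, 3, 4, 0, 5, 6, 5],
  [2, 5, 4, 2, 5, 4, 0, 3, 3, 4],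
  [3, 3, 0, 3, 1, 3],
  [],
  [],
  [3, 1, 3, 0, 3, 3, 0],
  [0, 6, 5, 0, 3, 1, 4, 0],
  [0, 4, 1, 4, 0, 4, 1, 4],
  [1, 4, 1, 5, 0, 3, 6, 1],
  [4, 1, 5, 0, 3, 6],
  [0, 3, 4, 3, 0, 5, 1, 6, 5, 0],
  [4, 2, 5, 0, 3, 0, 6],
  [0, 3, 1, 3, 0, 3, 3, 0],
  [],
  [0, 3, 3, 0, 3, 1, 3],
  [] ]

private def w8 : List (List Nat) :=
  [ [],
  [1, 3, 0, 5],
  [5, 0, 3, 3, 0, 5, 1],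
  [1, 5, 0, 3, 1, 3, 0, 5, 1],
  [2, 3, 2, 5, 0, 3, 0, 5, 2],
  [1, 4, 2, 3, 0, 5, 0, 6, 1],
  [6, 5, 0, 3, 1, 4],
  [3, 1, 4, 2, 3, 0, 3, 4, 4],
  [],
  [1, 3, 0, 5, 0, 3, 0, 5, 2],
  [3, 0, 5, 1],
  [],
  [5, 0, 3, 1, 3, 0, 5],
  [4, 1, 3, 0, 5, 6],
  [5, 6, 1, 5, 0, 3, 4, 3],
  [4, 2, 3, 0, 5, 0, 6],
  [1, 6, 5, 0, 3, 1, 4, 1],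
  [6, 1, 4, 3, 1, 3, 0, 3, 3],
  [],
  [3, 0, 5, 0, 3, 0, 5, 0],
  [1, 3, 0, 3, 3, 0, 3],
  [3, 0, 3, 1, 3, 0, 3],
  [],
  [5, 0, 3, 1],
  [0, 5, 2, 3, 0, 5, 0, 3, 0],
  [4, 1, 5, 2, 4, 2, 5, 6, 3, 0],
  [6, 0, 5, 0, 3, 2, 4],
  [3, 6, 1, 5, 0, 3, 4, 5],
  [],
  [0, 3, 6, 3, 0, 5, 4, 5],
  [1, 3, 0, 3, 1, 3, 0, 3, 1],
  [4, 3, 0, 5, 1, 6],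
  [1, 5, 0, 3],
  [],
  [2, 5, 2, 3, 0, 5, 0, 3, 2],
  [3, 2, 6, 2, 5, 6, 3, 6, 3, 6],
  [0, 4, 1, 5, 0, 3, 6, 0],
  [1, 4, 5, 2, 6, 3, 0, 6, 5],
  [],
  [1, 5, 0, 3, 0, 5, 0, 3, 2],
  [1, 4, 2, 3, 0, 3, 4, 4, 3],
  [5, 6, 5, 0, 3, 1, 4, 3],
  [0, 3, 1, 3, 6, 1, 4, 3, 3],
  [0, 5, 2, 6, 1, 5, 4, 4, 5],
  [],
  [1, 4, 0, 3, 0, 3, 1, 4, 4, 3],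
  [3, 4, 3, 0, 5, 1, 6, 5],
  [0, 4, 5, 0, 3, 4, 0, 5, 6, 5],
  [],
  [3, 1, 5, 0],
  [1, 4, 0, 3, 0, 5, 2, 6, 1],
  [4, 0, 3, 0, 5, 2, 6],
  [0, 5, 4, 3, 2, 6, 2, 3, 1, 6],
  [4, 5, 4, 5, 4, 3, 2, 4, 2, 5],
  [0, 5, 6, 3, 0, 6, 5, 6, 1, 4],
  [],
  [0, 4, 2, 5, 0, 3, 0, 6, 0],
  [2, 5, 4, 2, 5, 4, 0, 3, 3, 4],
  [],
  [5, 4, 0, 3, 0, 5, 2, 6, 3],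
  [6, 1, 5, 0, 3, 4],
  [0, 6, 1, 4, 0, 4, 1, 6],
  [6, 2, 5, 0, 3, 0, 4],
  [0, 4, 5, 0, 3, 1, 6, 0],
  [3, 4, 1, 3, 0, 5, 6, 5],
  [0, 4, 0, 5, 0, 3, 2, 6, 0],
  [],
  [3, 3, 0, 3, 1, 3],
  [],
  [0, 3, 1, 3, 0, 3, 3],
  [4, 4, 5, 0, 5, 2, 6, 1, 5],
  [3, 3, 0, 3, 1, 3, 6, 1, 4],
  [3, 6, 5, 0, 3, 1, 4, 5],
  [3, 4, 0, 5, 4, 2, 3, 6, 1],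
  [0, 3, 4, 1, 3, 0, 5, 6, 1, 5],
  [2, 6, 2, 5, 6, 3, 6, 3, 6, 3],
  [3, 1, 3, 0, 3, 3],
  [],
  [],
  [0, 3, 3, 0, 3, 1, 3],
  [],
  [],
  [],
  [],
  [],
  [],
  [],
  [],
  [],
  [],
  [2, 3, 0, 5, 0, 3, 0, 5, 1],
  [0, 3, 0, 5, 0, 3, 0, 5],
  [0, 5, 0, 3, 0, 5, 0, 3],
  [1, 3, 6, 3, 0, 5, 4, 5, 2],
  [0, 3, 1, 5],
  [5, 4, 2, 3, 0, 5, 0, 6, 3],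
  [3, 3, 0, 3, 1, 3, 0],
  [3, 1, 3, 0, 3, 3, 0],
  [],
  [] ]

private def w9 : List (List Nat) :=
  [ [],
  [2, 3, 0, 5, 0],
  [0, 5, 0, 3, 3, 0, 5, 2],
  [2, 5, 0, 3, 1, 3, 0, 5, 2],
  [5, 6, 3, 0, 5, 1, 4, 3],
  [2, 4, 2, 3, 0, 5, 0, 6, 2],
  [5, 6, 0, 3, 0, 5, 2, 4, 3],
  [0, 6, 5, 0, 3, 1, 4, 0],
  [2, 3, 0, 5, 0, 3, 0, 5, 1],
  [],
  [0, 3, 0, 5, 2],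
  [],
  [0, 5, 0, 3, 1, 3, 0, 5, 0],
  [0, 4, 1, 3, 0, 5, 6, 0],
  [3, 2, 5, 0, 3, 0, 5],
  [0, 4, 2, 3, 0, 5, 0, 6, 0],
  [0, 5, 4, 1, 3, 6, 1, 4, 3, 4],
  [0, 4, 1, 4, 0, 4, 1, 4],
  [0, 3, 0, 5, 0, 3, 0, 5],
  [],
  [2, 3, 0, 3, 3, 0, 3, 0],
  [0, 3, 0, 3, 1, 3, 0, 3, 0],
  [],
  [0, 5, 0, 3, 2],
  [5, 2, 3, 0, 5, 0, 3],
  [0, 4, 1, 5, 2, 4, 2, 5, 6, 3],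
  [0, 3, 6, 1, 5, 0, 3, 4, 5, 0],
  [1, 4, 1, 5, 0, 3, 6, 1],
  [0, 5, 0, 3, 0, 5, 0, 3],
  [],
  [2, 3, 0, 3, 1, 3, 0, 3, 2],
  [0, 3, 0, 3, 3, 0, 3, 2],
  [2, 5, 0, 3, 0],
  [],
  [0, 3, 4, 4, 3, 1, 4, 2, 3],
  [4, 0, 5, 0, 3, 0, 5, 0, 3, 6],
  [3, 6, 2, 3, 0, 5, 0, 4, 5],
  [4, 1, 5, 0, 3, 6],
  [1, 3, 6, 3, 0, 5, 4, 5, 2],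
  [],
  [5, 6, 1, 3, 0, 5, 4, 3],
  [3, 0, 5, 0, 3, 2, 5],
  [5, 0, 3, 0, 5, 2, 3],
  [1, 5, 0, 3, 0, 5, 2, 3, 1],
  [],
  [3, 2, 5, 6, 1, 3, 1, 3, 4],
  [0, 3, 1, 4, 3, 0, 5, 1, 6, 5],
  [0, 3, 4, 3, 0, 5, 1, 6, 5, 0],
  [0, 3, 1, 5],
  [],
  [2, 4, 0, 3, 0, 5, 2, 6, 2],
  [0, 4, 0, 3, 0, 5, 2, 6, 0],
  [3, 3, 0, 4, 3, 1, 6, 5, 2, 5],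
  [4, 0, 3, 6, 3, 0, 5, 4, 5, 6],
  [4, 5, 0, 3, 0, 5, 2, 3, 6],
  [],
  [2, 5, 4, 5, 4, 5, 4, 3, 2, 4],
  [4, 2, 5, 0, 3, 0, 6],
  [5, 4, 2, 3, 0, 5, 0, 6, 3],
  [],
  [5, 6, 2, 3, 0, 5, 0, 4, 3],
  [0, 4, 1, 6, 3, 1, 3, 0, 3, 3],
  [0, 3, 1, 3, 4, 1, 6, 0, 3, 3],
  [3, 6, 0, 3, 0, 5, 2, 4, 5],
  [0, 3, 4, 3, 0, 6, 5, 0, 3, 6],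
  [2, 6, 3, 3, 0, 6, 3, 2, 6, 3],
  [],
  [0, 3, 1, 3, 0, 3, 3, 0],
  [3, 3, 0, 3, 1, 3, 0],
  [],
  [0, 6, 1, 5, 0, 3, 4, 0],
  [2, 6, 1, 5, 0, 3, 4, 2],
  [1, 4, 5, 0, 3, 1, 6, 1],
  [4, 5, 0, 3, 1, 6],
  [0, 3, 4, 1, 3, 0, 5, 6, 5, 0],
  [4, 0, 5, 0, 3, 2, 6],
  [0, 3, 3, 0, 3, 1, 3, 0],
  [],
  [3, 1, 3, 0, 3, 3, 0],
  [],
  [1, 3, 0, 5, 0, 3, 0, 5, 2],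
  [3, 0, 5, 0, 3, 0, 5, 0],
  [0, 3, 6, 3, 0, 5, 4, 5],
  [1, 5, 0, 3, 0, 5, 0, 3, 2],
  [3, 1, 5, 0],
  [5, 4, 0, 3, 0, 5, 2, 6, 3],
  [0, 3, 1, 3, 0, 3, 3],
  [0, 3, 3, 0, 3, 1, 3],
  [],
  [],
  [],
  [],
  [],
  [],
  [],
  [],
  [],
  [],
  [],
  [] ]

private def wl : Nat → List (List Nat)
  | 0 => w0 | 1 => w1 | 2 => w2 | 3 => w3 | 4 => w4
  | 5 => w5 | 6 => w6 | 7 => w7 | 8 => w8 | _ => w9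

private def wtab (a b c : Fin 10) : List Nat :=
  (wl a.val).getD (b.val * 10 + c.val) []

set_option maxHeartbeats 4000000 in
set_option maxRecDepth 100000 in
private lemma key_eq : ∀ a b c : Fin 10, a ≠ b → b ≠ c →
    Equiv.swap a b * Equiv.swap b c = ((wtab a b c).map gen).prod := by
  decide

private lemma key (a b c : Fin 10) (h1 : a ≠ b) (h2 : b ≠ c) :
    Equiv.swap a b * Equiv.swap b c ∈ H := by
  rw [key_eq a b c h1 h2]
  exact prod_mem_H _

private lemma threeCycle_struct {sigma : Equiv.Perm (Fin 10)} (h : sigma.IsThreeCycle) :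
    ∃ a b c : Fin 10, a ≠ b ∧ b ≠ c ∧ sigma = Equiv.swap a b * Equiv.swap b c := by
  obtain ⟨a, ha, -⟩ := h.isCycle
  have h3 : sigma ^ 3 = 1 := by
    rw [← h.orderOf]; exact pow_orderOf_eq_one sigma
  have hcube : ∀ x, sigma (sigma (sigma x)) = x := by
    intro x
    have := Equiv.ext_iff.1 h3 x
    simpa [pow_succ, Equiv.Perm.mul_apply] using this
  have hab : a ≠ sigma a := Ne.symm ha
  have hbc : sigma a ≠ sigma (sigma a) := fun e => ha ((sigma.injective e).symm)
  have hac : a ≠ sigma (sigma a) := by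
    intro e
    have hc := hcube a
    rw [← e] at hc
    exact ha hc
  refine ⟨a, sigma a, sigma (sigma a), hab, hbc, ?_⟩
  have hsub : ({a, sigma a, sigma (sigma a)} : Finset (Fin 10)) ⊆ sigma.support := by
    intro x hx
    simp only [Finset.mem_insert, Finset.mem_singleton] at hx
    rcases hx with rfl | rfl | rfl
    · exact Equiv.Perm.mem_support.2 ha
    · exact Equiv.Perm.apply_mem_support.2 (Equiv.Perm.mem_support.2 ha)
    · exact Equiv.Perm.apply_mem_support.2
        (Equiv.Perm.apply_mem_support.2 (Equiv.Perm.mem_support.2 ha))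
  have hcard : ({a, sigma a, sigma (sigma a)} : Finset (Fin 10)).card = 3 := by
    rw [Finset.card_insert_of_notMem, Finset.card_insert_of_notMem, Finset.card_singleton]
    · simp only [Finset.mem_singleton]
      exact hbc
    · simp only [Finset.mem_insert, Finset.mem_singleton]
      push_neg
      exact ⟨hab, hac⟩
  have hsupp : sigma.support = {a, sigma a, sigma (sigma a)} :=
    (Finset.eq_of_subset_of_card_le hsub (by rw [hcard, h.card_support])).symm
  apply Equiv.ext
  intro x
  by_cases hx : x ∈ sigma.support
  · rw [hsupp] at hx
    simp only [Finset.mem_insert, Finset.mem_singleton] at hx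
    rcases hx with rfl | rfl | rfl
    · rw [Equiv.Perm.mul_apply, Equiv.swap_apply_of_ne_of_ne hab hac, Equiv.swap_apply_left]
    · rw [Equiv.Perm.mul_apply, Equiv.swap_apply_left,
        Equiv.swap_apply_of_ne_of_ne (Ne.symm hac) (Ne.symm hbc)]
    · rw [Equiv.Perm.mul_apply, Equiv.swap_apply_right, Equiv.swap_apply_right]
      exact hcube a
  · have hfix : sigma x = x := Equiv.Perm.notMem_support.1 hx
    rw [hsupp] at hx
    simp only [Finset.mem_insert, Finset.mem_singleton] at hx
    push_neg at hx
    obtain ⟨hx1, hx2, hx3⟩ := hx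
    rw [hfix, Equiv.Perm.mul_apply,
      Equiv.swap_apply_of_ne_of_ne hx2 hx3, Equiv.swap_apply_of_ne_of_ne hx1 hx2]

private lemma main_lemma : H = alternatingGroup (Fin 10) := by
  apply le_antisymm
  · rw [Subgroup.closure_le]
    intro x hx
    simp only [Set.mem_insert_iff, Set.mem_singleton_iff] at hx
    rcases hx with rfl | rfl | rfl | rfl | rfl <;>
      exact Equiv.Perm.mem_alternatingGroup.2 (by decide)
  · rw [← Equiv.Perm.closure_three_cycles_eq_alternating, Subgroup.closure_le]
    intro sigma hsigma
    obtain ⟨a, b, c, h1, h2, rfl⟩ := threeCycle_struct hsigma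
    exact key a b c h1 h2

/- Permutations of {1,…,10} are encoded as `Equiv.Perm (Fin 10)`, where `k : Fin 10`
stands for the point k+1; `c[…]` is cycle notation. -/

/-- The subgroup generated by the five permutations
(7,8)(9,10), (1,2)(3,4), (1,2)(3,4)(7,8)(9,10), (1,8,4,5)(2,7,3,10),
(1,9,4,8)(3,10,6,7) equals the alternating group A₁₀. -/
theorem closure_eq_alternating :
    Subgroup.closure
      ({ c[(6 : Fin 10), 7] * c[(8 : Fin 10), 9],
         c[(0 : Fin 10), 1] * c[(2 : Fin 10), 3],
         c[(0 : Fin 10), 1] * c[(2 : Fin 10), 3] * c[(6 : Fin 10), 7] * c[(8 : Fin 10), 9],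
         c[(0 : Fin 10), 7, 3, 4] * c[(1 : Fin 10), 6, 2, 9],
         c[(0 : Fin 10), 8, 3, 7] * c[(2 : Fin 10), 9, 5, 6] } : Set (Equiv.Perm (Fin 10)))
      = alternatingGroup (Fin 10) := main_lemma
end

section
/- The subgroup of the symmetric group on {1,...,10} generated by the five permutations (1,2)(4,7,5,6)(8,10,9), (1,2,3)(4,7,5,6)(9,10), (1,2)(4,5,6,7)(8,10,9), (1,2,3)(4,5,6,7)(9,10), (1,7)(2,8)(3,9)(4,10)(5,6) is the full symmetric group S₁₀. -/
set_option maxRecDepth 4000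


/- Permutations of {1,…,10} are encoded as `Equiv.Perm (Fin 10)`, where `k : Fin 10`
stands for the point k+1; `c[…]` is cycle notation. -/

/-- The subgroup generated by the five permutations
(1,2)(4,7,5,6)(8,10,9), (1,2,3)(4,7,5,6)(9,10), (1,2)(4,5,6,7)(8,10,9),
(1,2,3)(4,5,6,7)(9,10), (1,7)(2,8)(3,9)(4,10)(5,6) is the full symmetric group S₁₀. -/
theorem closure_eq_symmetric :
    Subgroup.closure
      ({ c[(0 : Fin 10), 1] * c[(3 : Fin 10), 6, 4, 5] * c[(7 : Fin 10), 9, 8],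
         c[(0 : Fin 10), 1, 2] * c[(3 : Fin 10), 6, 4, 5] * c[(8 : Fin 10), 9],
         c[(0 : Fin 10), 1] * c[(3 : Fin 10), 4, 5, 6] * c[(7 : Fin 10), 9, 8],
         c[(0 : Fin 10), 1, 2] * c[(3 : Fin 10), 4, 5, 6] * c[(8 : Fin 10), 9],
         c[(0 : Fin 10), 6] * c[(1 : Fin 10), 7] * c[(2 : Fin 10), 8] *
           c[(3 : Fin 10), 9] * c[(4 : Fin 10), 5] } : Set (Equiv.Perm (Fin 10)))
      = ⊤ := by
  set S : Set (Equiv.Perm (Fin 10)) :=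
      { c[(0 : Fin 10), 1] * c[(3 : Fin 10), 6, 4, 5] * c[(7 : Fin 10), 9, 8],
         c[(0 : Fin 10), 1, 2] * c[(3 : Fin 10), 6, 4, 5] * c[(8 : Fin 10), 9],
         c[(0 : Fin 10), 1] * c[(3 : Fin 10), 4, 5, 6] * c[(7 : Fin 10), 9, 8],
         c[(0 : Fin 10), 1, 2] * c[(3 : Fin 10), 4, 5, 6] * c[(8 : Fin 10), 9],
         c[(0 : Fin 10), 6] * c[(1 : Fin 10), 7] * c[(2 : Fin 10), 8] *
           c[(3 : Fin 10), 9] * c[(4 : Fin 10), 5] } with hS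
  have h0 : (c[(0 : Fin 10), 1] * c[(3 : Fin 10), 6, 4, 5] * c[(7 : Fin 10), 9, 8]) ∈
      Subgroup.closure S := Subgroup.subset_closure (by simp [hS])
  have h1 : (c[(0 : Fin 10), 1, 2] * c[(3 : Fin 10), 6, 4, 5] * c[(8 : Fin 10), 9]) ∈
      Subgroup.closure S := Subgroup.subset_closure (by simp [hS])
  have h2 : (c[(0 : Fin 10), 1] * c[(3 : Fin 10), 4, 5, 6] * c[(7 : Fin 10), 9, 8]) ∈
      Subgroup.closure S := Subgroup.subset_closure (by simp [hS])
  have h3 : (c[(0 : Fin 10), 1, 2] * c[(3 : Fin 10), 4, 5, 6] * c[(8 : Fin 10), 9]) ∈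
      Subgroup.closure S := Subgroup.subset_closure (by simp [hS])
  have h4 : (c[(0 : Fin 10), 6] * c[(1 : Fin 10), 7] * c[(2 : Fin 10), 8] *
      c[(3 : Fin 10), 9] * c[(4 : Fin 10), 5]) ∈ Subgroup.closure S :=
    Subgroup.subset_closure (by simp [hS])
  set σ : Equiv.Perm (Fin 10) := c[(0 : Fin 10), 5, 3, 7, 1, 8, 2, 9, 4, 6] with hσ
  have hcyc : σ.IsCycle := List.isCycle_formPerm (by decide) (by decide)
  have hsupp : σ.support = Finset.univ := by decide
  have hσmem : σ ∈ Subgroup.closure S := by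
    have : σ = (c[(0 : Fin 10), 1] * c[(3 : Fin 10), 6, 4, 5] * c[(7 : Fin 10), 9, 8]) *
        (c[(0 : Fin 10), 1] * c[(3 : Fin 10), 6, 4, 5] * c[(7 : Fin 10), 9, 8]) *
        (c[(0 : Fin 10), 6] * c[(1 : Fin 10), 7] * c[(2 : Fin 10), 8] *
           c[(3 : Fin 10), 9] * c[(4 : Fin 10), 5]) := by decide
    rw [this]; exact mul_mem (mul_mem h0 h0) h4
  have hswap : Equiv.swap (0 : Fin 10) (σ 0) ∈ Subgroup.closure S := by
    have : Equiv.swap (0 : Fin 10) (σ 0) =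
        (c[(0 : Fin 10), 1, 2] * c[(3 : Fin 10), 6, 4, 5] * c[(8 : Fin 10), 9]) *
        (c[(0 : Fin 10), 1] * c[(3 : Fin 10), 6, 4, 5] * c[(7 : Fin 10), 9, 8]) *
        (c[(0 : Fin 10), 6] * c[(1 : Fin 10), 7] * c[(2 : Fin 10), 8] *
           c[(3 : Fin 10), 9] * c[(4 : Fin 10), 5]) *
        (c[(0 : Fin 10), 1, 2] * c[(3 : Fin 10), 6, 4, 5] * c[(8 : Fin 10), 9]) *
        (c[(0 : Fin 10), 6] * c[(1 : Fin 10), 7] * c[(2 : Fin 10), 8] *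
           c[(3 : Fin 10), 9] * c[(4 : Fin 10), 5]) *
        (c[(0 : Fin 10), 1, 2] * c[(3 : Fin 10), 4, 5, 6] * c[(8 : Fin 10), 9]) *
        (c[(0 : Fin 10), 6] * c[(1 : Fin 10), 7] * c[(2 : Fin 10), 8] *
           c[(3 : Fin 10), 9] * c[(4 : Fin 10), 5]) *
        (c[(0 : Fin 10), 1, 2] * c[(3 : Fin 10), 6, 4, 5] * c[(8 : Fin 10), 9]) *
        (c[(0 : Fin 10), 6] * c[(1 : Fin 10), 7] * c[(2 : Fin 10), 8] *
           c[(3 : Fin 10), 9] * c[(4 : Fin 10), 5]) *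
        (c[(0 : Fin 10), 1, 2] * c[(3 : Fin 10), 6, 4, 5] * c[(8 : Fin 10), 9]) *
        (c[(0 : Fin 10), 6] * c[(1 : Fin 10), 7] * c[(2 : Fin 10), 8] *
           c[(3 : Fin 10), 9] * c[(4 : Fin 10), 5]) *
        (c[(0 : Fin 10), 1] * c[(3 : Fin 10), 4, 5, 6] * c[(7 : Fin 10), 9, 8]) *
        (c[(0 : Fin 10), 1, 2] * c[(3 : Fin 10), 4, 5, 6] * c[(8 : Fin 10), 9]) := by decide
    rw [this]
    exact mul_mem (mul_mem (mul_mem (mul_mem (mul_mem (mul_mem (mul_mem (mul_mem (mul_mem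
      (mul_mem (mul_mem (mul_mem h1 h0) h4) h1) h4) h3) h4) h1) h4) h1) h4) h2) h3
  rw [eq_top_iff, ← Equiv.Perm.closure_cycle_adjacent_swap hcyc hsupp 0, Subgroup.closure_le,
    Set.insert_subset_iff, Set.singleton_subset_iff]
  exact ⟨hσmem, hswap⟩
end
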